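/- Every positive integer n has as many partitions with λ₁ < λ₂ + λ_m (into at least two distinct parts) as partitions with k₁ > k_m, and as many partitions with λ₁ > λ₂ + λ_m as partitions with k₁ < k_m. -/

import Mathlib

/-- A partition `(λ₁,...,λ_m)×[k₁,...,k_m]`: strictly decreasing positive parts
with positive multiplicities, same length. -/
def IsPart (p : List ℕ × List ℕ) : Prop :=
  p.1.length = p.2.length ∧ List.Chain' (· > ·) p.1 ∧
  (∀ x ∈ p.1, 0 < x) ∧ (∀ x ∈ p.2, 0 < x)

/-- size of a partition: Σ kᵢ λᵢ -/
def psize (p : List ℕ × List ℕ) : ℕ := (List.zipWith (· * ·) p.1 p.2).sum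

def parts1 (L : List ℕ) : ℕ := L.headD 0      -- λ₁
def parts2 (L : List ℕ) : ℕ := L.tail.headD 0 -- λ₂
def parts3 (L : List ℕ) : ℕ := L.tail.tail.headD 0 -- λ₃
def partsLast (L : List ℕ) : ℕ := L.getLastD 0 -- λ_m
def partsPrelast (L : List ℕ) : ℕ := L.dropLast.getLastD 0 -- λ_{m-1}

def T0parts : List ℕ → List ℕ
  | a :: b :: t => b :: (t ++ [a - b])
  | l => l

def T0mults : List ℕ → List ℕ
  | a :: b :: t => (a + b) :: (t ++ [a])
  | l => l

def T1parts (L : List ℕ) : List ℕ := (parts1 L - partsLast L) :: L.tail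

def T1mults (K : List ℕ) : List ℕ := K.dropLast ++ [K.headD 0 + K.getLastD 0]

def TDparts (L : List ℕ) : List ℕ := L.tail

def TDmults : List ℕ → List ℕ
  | [a, b] => [2 * a + b]
  | a :: b :: t => (a + b) :: (t.dropLast ++ [a + t.getLastD 0])
  | l => l

def T0map (p : List ℕ × List ℕ) : List ℕ × List ℕ := (T0parts p.1, T0mults p.2)
def T1map (p : List ℕ × List ℕ) : List ℕ × List ℕ := (T1parts p.1, T1mults p.2)

/-- △₀ : partitions of dimension ≥ 2 with λ₁ < λ₂ + λ_m -/
def Tri0 : Set (List ℕ × List ℕ) :=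
  {p | IsPart p ∧ 2 ≤ p.1.length ∧ parts1 p.1 < parts2 p.1 + partsLast p.1}

/-- △₁ : partitions of dimension ≥ 2 with λ₁ > λ₂ + λ_m -/
def Tri1 : Set (List ℕ × List ℕ) :=
  {p | IsPart p ∧ 2 ≤ p.1.length ∧ parts2 p.1 + partsLast p.1 < parts1 p.1}

/-- M₀ : partitions of dimension ≥ 2 with k₁ > k_m -/
def M0 : Set (List ℕ × List ℕ) :=
  {p | IsPart p ∧ 2 ≤ p.1.length ∧ p.2.getLastD 0 < p.2.headD 0}

/-- M₁ : partitions of dimension ≥ 2 with k₁ < k_m -/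
def M1 : Set (List ℕ × List ℕ) :=
  {p | IsPart p ∧ 2 ≤ p.1.length ∧ p.2.headD 0 < p.2.getLastD 0}

/-- △_d^G : partitions with λ₂ + dλ_m < λ₁ < λ₂ + (d+1)λ_m -/
def GaussSet (d : ℕ) : Set (List ℕ × List ℕ) :=
  {p | IsPart p ∧ 2 ≤ p.1.length ∧
    parts2 p.1 + d * partsLast p.1 < parts1 p.1 ∧
    parts1 p.1 < parts2 p.1 + (d + 1) * partsLast p.1}

/-! Both identities come from explicit size-preserving bijections.
`T0map` sends `(λ₁,…,λ_m)×[k₁,…,k_m]` to `(λ₂,…,λ_m,λ₁-λ₂)×[k₁+k₂,k₃,…,k_m,k₁]`: the new last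
part `λ₁-λ₂` stays below `λ_m` exactly when `λ₁ < λ₂ + λ_m`, and the new first multiplicity
`k₁+k₂` exceeds the new last one `k₁`. `T1map` sends it to
`(λ₁-λ_m,λ₂,…,λ_m)×[k₁,…,k_{m-1},k₁+k_m]`: the new first part stays above `λ₂` exactly when
`λ₁ > λ₂ + λ_m`, and `k₁ < k₁+k_m`. In both cases `k₁` can be read off the image, which gives
the inverse maps. -/

theorem ncard_sep_eq_of_invOn {α β : Type*} {f : α → β} {g : β → α} {s : Set α} {t : Set β}
    {v : α → ℕ} {w : β → ℕ} (hinv : Set.InvOn g f s t) (hf : Set.MapsTo f s t)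
    (hg : Set.MapsTo g t s) (hw : ∀ p ∈ s, w (f p) = v p) (n : ℕ) :
    {p | p ∈ s ∧ v p = n}.ncard = {q | q ∈ t ∧ w q = n}.ncard := by
  refine Set.BijOn.ncard_eq (Set.InvOn.bijOn (hinv.mono (fun _ h ↦ h.1) fun _ h ↦ h.1) ?_ ?_)
  · rintro p ⟨hp, rfl⟩
    exact ⟨hf hp, hw p hp⟩
  · rintro q ⟨hq, rfl⟩
    refine ⟨hg hq, ?_⟩
    rw [← hw _ (hg hq), hinv.2 hq]

theorem List.getLastD_cons_append_singleton {α : Type*} (a e d : α) (L : List α) :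
    (a :: (L ++ [e])).getLastD d = e := by
  rw [List.getLastD_cons, List.getLastD_concat]

theorem List.dropLast_cons_append_singleton {α : Type*} (a e : α) (L : List α) :
    (a :: (L ++ [e])).dropLast = a :: L := by
  rw [← List.cons_append, List.dropLast_concat]

theorem isPart_iff {p : List ℕ × List ℕ} : IsPart p ↔ p.1.length = p.2.length ∧
    p.1.IsChain (· > ·) ∧ (∀ x ∈ p.1, 0 < x) ∧ ∀ x ∈ p.2, 0 < x := Iff.rfl

-- For `L = []` the middle condition is `0 < a`.
theorem isPart_cons_iff {a x : ℕ} {L K : List ℕ} :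
    IsPart (a :: L, x :: K) ↔ IsPart (L, K) ∧ L.headD 0 < a ∧ 0 < x := by
  cases L <;> simp [isPart_iff, eq_comm (a := 0)] <;> grind

theorem isPart_cons_append_iff {a b x y : ℕ} {L K : List ℕ} :
    IsPart (b :: (L ++ [a]), y :: (K ++ [x])) ↔
      IsPart (b :: L, y :: K) ∧ 0 < a ∧ a < L.getLastD b ∧ 0 < x := by
  simp only [isPart_iff]
  rw [← List.cons_append, List.isChain_append]
  simp [or_imp, forall_and, List.getLast?_cons]
  tauto

theorem IsPart.exists_eq_cons_cons {p : List ℕ × List ℕ} (h : IsPart p) (h2 : 2 ≤ p.1.length) :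
    ∃ a b L x y K, p = (a :: b :: L, x :: y :: K) := by
  obtain ⟨_ | ⟨a, _ | ⟨b, L⟩⟩, _ | ⟨x, _ | ⟨y, K⟩⟩⟩ := p <;> simp_all [isPart_iff]

theorem IsPart.exists_eq_cons_append {p : List ℕ × List ℕ} (h : IsPart p) (h2 : 2 ≤ p.1.length) :
    ∃ a L e x K w, p = (a :: (L ++ [e]), x :: (K ++ [w])) := by
  obtain ⟨a, b, L, x, y, K, rfl⟩ := h.exists_eq_cons_cons h2
  exact ⟨a, (b :: L).dropLast, (b :: L).getLast (List.cons_ne_nil _ _), x, (y :: K).dropLast,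
    (y :: K).getLast (List.cons_ne_nil _ _), by simp only [List.dropLast_append_getLast]⟩

theorem IsPart.update_last_mult {L K : List ℕ} {w : ℕ} (h : IsPart (L, K ++ [w])) {w' : ℕ}
    (hw' : 0 < w') : IsPart (L, K ++ [w']) := by
  obtain ⟨hlen, hchain, hparts, hmults⟩ := h
  simp only [List.mem_append, List.mem_singleton, or_imp, forall_and, forall_eq] at hmults
  exact ⟨by simpa using hlen, hchain, hparts, by simpa [or_imp, forall_and] using ⟨hmults.1, hw'⟩⟩

theorem psize_cons (a x : ℕ) (L K : List ℕ) : psize (a :: L, x :: K) = a * x + psize (L, K) := by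
  simp [psize]

theorem psize_append_singleton {L K : List ℕ} (h : L.length = K.length) (a x : ℕ) :
    psize (L ++ [a], K ++ [x]) = psize (L, K) + a * x := by
  simp [psize, List.zipWith_append h]

def T0mapInv (p : List ℕ × List ℕ) : List ℕ × List ℕ :=
  ((parts1 p.1 + partsLast p.1) :: p.1.dropLast,
   p.2.getLastD 0 :: (p.2.headD 0 - p.2.getLastD 0) :: p.2.tail.dropLast)

def T1mapInv (p : List ℕ × List ℕ) : List ℕ × List ℕ :=
  ((parts1 p.1 + partsLast p.1) :: p.1.tail,
   p.2.dropLast ++ [p.2.getLastD 0 - p.2.headD 0])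

section
variable {a b e x y w : ℕ} {L K : List ℕ}

theorem T0map_cons_cons :
    T0map (a :: b :: L, x :: y :: K) = (b :: (L ++ [a - b]), (x + y) :: (K ++ [x])) := rfl

theorem T0mapInv_cons_append :
    T0mapInv (a :: (L ++ [e]), x :: (K ++ [w])) = ((a + e) :: a :: L, w :: (x - w) :: K) := by
  simp only [T0mapInv, parts1, partsLast, List.getLastD_cons_append_singleton, List.headD_cons,
    List.tail_cons, List.dropLast_cons_append_singleton, List.dropLast_concat]

theorem T1map_cons_append :
    T1map (a :: (L ++ [e]), x :: (K ++ [w])) = ((a - e) :: (L ++ [e]), x :: (K ++ [x + w])) := by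
  simp only [T1map, T1parts, T1mults, parts1, partsLast, List.getLastD_cons_append_singleton,
    List.headD_cons, List.tail_cons, List.dropLast_cons_append_singleton, List.cons_append]

theorem T1mapInv_cons_append :
    T1mapInv (a :: (L ++ [e]), x :: (K ++ [w])) = ((a + e) :: (L ++ [e]), x :: (K ++ [w - x])) := by
  simp only [T1mapInv, parts1, partsLast, List.getLastD_cons_append_singleton, List.headD_cons,
    List.tail_cons, List.dropLast_cons_append_singleton, List.cons_append]

theorem mem_Tri0_cons_cons :
    (a :: b :: L, x :: y :: K) ∈ Tri0 ↔
      IsPart (a :: b :: L, x :: y :: K) ∧ a < b + L.getLastD b := by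
  simp only [Tri0, parts1, parts2, partsLast, Set.mem_ofPred_eq, List.headD_cons, List.tail_cons,
    List.getLastD_cons, List.length_cons]
  simp

theorem mem_M0_cons_append :
    (a :: (L ++ [e]), x :: (K ++ [w])) ∈ M0 ↔
      IsPart (a :: (L ++ [e]), x :: (K ++ [w])) ∧ w < x := by
  simp only [M0, Set.mem_ofPred_eq, List.getLastD_cons_append_singleton, List.headD_cons]
  simp

theorem mem_Tri1_cons_append :
    (a :: (L ++ [e]), x :: (K ++ [w])) ∈ Tri1 ↔
      IsPart (a :: (L ++ [e]), x :: (K ++ [w])) ∧ (L ++ [e]).headD 0 + e < a := by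
  simp only [Tri1, parts1, parts2, partsLast, Set.mem_ofPred_eq,
    List.getLastD_cons_append_singleton, List.headD_cons, List.tail_cons]
  simp

theorem mem_M1_cons_append :
    (a :: (L ++ [e]), x :: (K ++ [w])) ∈ M1 ↔
      IsPart (a :: (L ++ [e]), x :: (K ++ [w])) ∧ x < w := by
  simp only [M1, Set.mem_ofPred_eq, List.getLastD_cons_append_singleton, List.headD_cons]
  simp

end

theorem mapsTo_T0map : Set.MapsTo T0map Tri0 M0 := by
  intro p hTri
  obtain ⟨a, b, L, x, y, K, rfl⟩ := hTri.1.exists_eq_cons_cons hTri.2.1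
  simp only [mem_Tri0_cons_cons, isPart_cons_iff, List.headD_cons] at hTri
  obtain ⟨⟨⟨hLK, hb, hy⟩, hba, hx⟩, hlt⟩ := hTri
  rw [T0map_cons_cons, mem_M0_cons_append, isPart_cons_append_iff, isPart_cons_iff]
  exact ⟨⟨⟨hLK, hb, by omega⟩, by omega, by omega, hx⟩, by omega⟩

theorem leftInvOn_T0map : Set.LeftInvOn T0mapInv T0map Tri0 := by
  intro p hTri
  obtain ⟨a, b, L, x, y, K, rfl⟩ := hTri.1.exists_eq_cons_cons hTri.2.1
  simp only [mem_Tri0_cons_cons, isPart_cons_iff, List.headD_cons] at hTri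
  rw [T0map_cons_cons, T0mapInv_cons_append, Nat.add_sub_cancel' hTri.1.2.1.le,
    Nat.add_sub_cancel_left]

theorem psize_T0map {p : List ℕ × List ℕ} (hp : p ∈ Tri0) : psize (T0map p) = psize p := by
  obtain ⟨a, b, L, x, y, K, rfl⟩ := hp.1.exists_eq_cons_cons hp.2.1
  simp only [mem_Tri0_cons_cons, isPart_cons_iff, List.headD_cons] at hp
  obtain ⟨⟨⟨hLK, -, -⟩, hba, -⟩, -⟩ := hp
  obtain ⟨c, rfl⟩ := Nat.exists_eq_add_of_le hba.le
  rw [T0map_cons_cons, psize_cons, psize_append_singleton hLK.1, psize_cons, psize_cons,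
    Nat.add_sub_cancel_left]
  ring

theorem mapsTo_T0mapInv : Set.MapsTo T0mapInv M0 Tri0 := by
  intro p hM
  obtain ⟨a, L, e, x, K, w, rfl⟩ := hM.1.exists_eq_cons_append hM.2.1
  rw [mem_M0_cons_append, isPart_cons_append_iff, isPart_cons_iff] at hM
  obtain ⟨⟨⟨hLK, ha, hx⟩, he, heL, hw⟩, hwx⟩ := hM
  rw [T0mapInv_cons_append, mem_Tri0_cons_cons, isPart_cons_iff, isPart_cons_iff, List.headD_cons]
  exact ⟨⟨⟨hLK, ha, by omega⟩, by omega, hw⟩, by omega⟩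

theorem rightInvOn_T0map : Set.RightInvOn T0mapInv T0map M0 := by
  intro p hM
  obtain ⟨a, L, e, x, K, w, rfl⟩ := hM.1.exists_eq_cons_append hM.2.1
  rw [mem_M0_cons_append] at hM
  rw [T0mapInv_cons_append, T0map_cons_cons, Nat.add_sub_cancel_left, Nat.add_sub_cancel' hM.2.le]

theorem mapsTo_T1map : Set.MapsTo T1map Tri1 M1 := by
  intro p hTri
  obtain ⟨a, L, e, x, K, w, rfl⟩ := hTri.1.exists_eq_cons_append hTri.2.1
  rw [mem_Tri1_cons_append, isPart_cons_iff] at hTri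
  obtain ⟨⟨hpart, ha, hx⟩, hlt⟩ := hTri
  have hw : 0 < w := hpart.2.2.2 w (by simp)
  rw [T1map_cons_append, mem_M1_cons_append, isPart_cons_iff]
  exact ⟨⟨hpart.update_last_mult (by omega), by omega, hx⟩, by omega⟩

theorem leftInvOn_T1map : Set.LeftInvOn T1mapInv T1map Tri1 := by
  intro p hTri
  obtain ⟨a, L, e, x, K, w, rfl⟩ := hTri.1.exists_eq_cons_append hTri.2.1
  rw [mem_Tri1_cons_append] at hTri
  rw [T1map_cons_append, T1mapInv_cons_append, Nat.sub_add_cancel (by omega),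
    Nat.add_sub_cancel_left]

theorem psize_T1map {p : List ℕ × List ℕ} (hp : p ∈ Tri1) : psize (T1map p) = psize p := by
  obtain ⟨a, L, e, x, K, w, rfl⟩ := hp.1.exists_eq_cons_append hp.2.1
  rw [mem_Tri1_cons_append] at hp
  obtain ⟨hpart, hlt⟩ := hp
  have hLK : L.length = K.length := by simpa using hpart.1
  obtain ⟨c, rfl⟩ := Nat.exists_eq_add_of_le (show e ≤ a by omega)
  rw [T1map_cons_append, psize_cons, psize_cons, psize_append_singleton hLK,
    psize_append_singleton hLK, Nat.add_sub_cancel_left]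
  ring

theorem mapsTo_T1mapInv : Set.MapsTo T1mapInv M1 Tri1 := by
  intro p hM
  obtain ⟨a, L, e, x, K, w, rfl⟩ := hM.1.exists_eq_cons_append hM.2.1
  rw [mem_M1_cons_append, isPart_cons_iff] at hM
  obtain ⟨⟨hpart, ha, hx⟩, hxw⟩ := hM
  rw [T1mapInv_cons_append, mem_Tri1_cons_append, isPart_cons_iff]
  exact ⟨⟨hpart.update_last_mult (by omega), by omega, hx⟩, by omega⟩

theorem rightInvOn_T1map : Set.RightInvOn T1mapInv T1map M1 := by
  intro p hM
  obtain ⟨a, L, e, x, K, w, rfl⟩ := hM.1.exists_eq_cons_append hM.2.1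
  rw [mem_M1_cons_append] at hM
  rw [T1mapInv_cons_append, T1map_cons_append, Nat.add_sub_cancel, Nat.add_sub_cancel' hM.2.le]

theorem stmt5_general (n : ℕ) :
    {p | p ∈ Tri0 ∧ psize p = n}.ncard = {p | p ∈ M0 ∧ psize p = n}.ncard ∧
    {p | p ∈ Tri1 ∧ psize p = n}.ncard = {p | p ∈ M1 ∧ psize p = n}.ncard :=
  ⟨ncard_sep_eq_of_invOn ⟨leftInvOn_T0map, rightInvOn_T0map⟩ mapsTo_T0map mapsTo_T0mapInv
      (fun _ ↦ psize_T0map) n,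
    ncard_sep_eq_of_invOn ⟨leftInvOn_T1map, rightInvOn_T1map⟩ mapsTo_T1map mapsTo_T1mapInv
      (fun _ ↦ psize_T1map) n⟩

theorem stmt5 (n : ℕ) (hn : 0 < n) :
    {p | p ∈ Tri0 ∧ psize p = n}.ncard = {p | p ∈ M0 ∧ psize p = n}.ncard ∧
    {p | p ∈ Tri1 ∧ psize p = n}.ncard = {p | p ∈ M1 ∧ psize p = n}.ncard :=
  stmt5_general n
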